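/- Let X and H be any finite simple graphs, each with at least one vertex, and let S = K[V(X ⊙ H)]. Then the Krull dimension of S/I(X ⊙ H) equals |V(X)| · ( dim(K[V(H')]/I(H')) + |i(H)| ), where dim denotes Krull dimension. -/

import Mathlib

open MvPolynomial CategoryTheory

universe u v

/-- The corona product `X ⊙ H` of two simple graphs: one copy of `X` and, for each vertex `i`
of `X`, a copy of `H` all of whose vertices are joined to `i`. -/
def SimpleGraph.corona {α β : Type*} (X : SimpleGraph α) (H : SimpleGraph β) :
    SimpleGraph (α ⊕ α × β) where
  Adj u v :=
    match u, v with
    | Sum.inl i, Sum.inl j => X.Adj i j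
    | Sum.inl i, Sum.inr p => i = p.1
    | Sum.inr p, Sum.inl j => p.1 = j
    | Sum.inr p, Sum.inr q => p.1 = q.1 ∧ H.Adj p.2 q.2
  symm := by
    refine ⟨?_⟩
    rintro (i | p) (j | q) h
    · exact X.adj_symm h
    · exact h.symm
    · exact h.symm
    · exact ⟨h.1.symm, H.adj_symm h.2⟩
  loopless := by
    refine ⟨?_⟩
    rintro (i | p) h
    · exact X.irrefl h
    · exact H.irrefl h.2

/-- The edge ideal `I(G)` of a simple graph inside `K[V(G)]`. -/
noncomputable def SimpleGraph.edgeIdeal (K : Type u) [Field K] {V : Type v} (G : SimpleGraph V) :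
    Ideal (MvPolynomial V K) :=
  Ideal.span {m | ∃ i j, G.Adj i j ∧ m = X i * X j}

/-- The set of isolated vertices of a graph. -/
def SimpleGraph.isolatedVerts {V : Type v} (H : SimpleGraph V) : Set V :=
  {v | ∀ w, ¬ H.Adj v w}

/-- The induced subgraph `H'` of `H` on the non-isolated vertices. -/
def SimpleGraph.nonIsolatedPart {V : Type v} (H : SimpleGraph V) :
    SimpleGraph {v : V | ∃ w, H.Adj v w} :=
  H.induce {v : V | ∃ w, H.Adj v w}

/-- `depth` of `S/I` over `S = K[V]`, computed with respect to the graded maximal ideal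
`(X v : v ∈ V)`: the supremum of lengths of `S/I`-regular sequences contained in that ideal. -/
noncomputable def gradedDepth (K : Type u) [Field K] {V : Type v}
    (I : Ideal (MvPolynomial V K)) : ℕ :=
  sSup {n : ℕ | ∃ rs : List (MvPolynomial V K), rs.length = n ∧
    (∀ r ∈ rs, r ∈ Ideal.span (Set.range (MvPolynomial.X : V → MvPolynomial V K))) ∧
    RingTheory.Sequence.IsRegular (MvPolynomial V K ⧸ I) rs}

/-- `projDimLE R n M` : the module `M` has a projective resolution of length at most `n`. -/
def projDimLE (R : Type u) [Ring R] : ℕ → ModuleCat.{v} R → Prop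
  | 0, M => Module.Projective R M
  | n + 1, M => ∃ (P : ModuleCat.{v} R) (f : P →ₗ[R] M), Module.Projective R P ∧
      Function.Surjective f ∧ projDimLE R n (ModuleCat.of R (LinearMap.ker f))

/-- The projective dimension of a module, as an extended natural number. -/
noncomputable def projDim (R : Type u) [Ring R] (M : Type v) [AddCommGroup M] [Module R M] :
    ℕ∞ :=
  sInf {n : ℕ∞ | ∃ k : ℕ, (k : ℕ∞) = n ∧ projDimLE R k (ModuleCat.of R M)}

/-- The independence number of a graph. -/
noncomputable def SimpleGraph.indepNumOld {V : Type v} (G : SimpleGraph V) : ℕ :=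
  sSup {n : ℕ | ∃ s : Finset V, s.card = n ∧ ∀ v ∈ s, ∀ w ∈ s, ¬ G.Adj v w}


/-! ### Auxiliary machinery -/

open Finset
open scoped Classical

section CLPart
variable {R : Type*} [CommRing R]



/-- The Coquand–Lombardi sum. -/
def CLsum (x : ℕ → R) (m : ℕ → ℕ) (a : ℕ → R) (n : ℕ) : R :=
  (∑ i ∈ Finset.range (n+1), (∏ j ∈ Finset.range (i+1), x j ^ m j) * (a i * x i))
  + ∏ j ∈ Finset.range (n+1), x j ^ m j

lemma CLsum_zero (x : ℕ → R) (m : ℕ → ℕ) (a : ℕ → R) :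
    CLsum x m a 0 = x 0 ^ m 0 * (a 0 * x 0 + 1) := by
  simp [CLsum]; ring

lemma CLsum_succ (x : ℕ → R) (m : ℕ → ℕ) (a : ℕ → R) (n : ℕ) :
    CLsum x m a (n+1) = x 0 ^ m 0 *
      (CLsum (fun i => x (i+1)) (fun i => m (i+1)) (fun i => a (i+1)) n + a 0 * x 0) := by
  simp only [CLsum]
  rw [Finset.sum_range_succ' (fun i => (∏ j ∈ Finset.range (i+1), x j ^ m j) * (a i * x i)),
    Finset.prod_range_succ' (fun j => x j ^ m j) (n+1)]
  have hthis : ∀ i, (∏ j ∈ Finset.range (i+1+1), x j ^ m j) =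
      (∏ j ∈ Finset.range (i+1), x (j+1) ^ m (j+1)) * x 0 ^ m 0 := fun i =>
    Finset.prod_range_succ' (fun j => x j ^ m j) (i+1)
  rw [Finset.sum_congr rfl fun i _ => by rw [hthis]]
  have hs : (∑ i ∈ Finset.range (n+1),
      ((∏ j ∈ Finset.range (i+1), x (j+1) ^ m (j+1)) * x 0 ^ m 0) * (a (i+1) * x (i+1)))
      = x 0 ^ m 0 * ∑ i ∈ Finset.range (n+1),
      (∏ j ∈ Finset.range (i+1), x (j+1) ^ m (j+1)) * (a (i+1) * x (i+1)) := by
    rw [Finset.mul_sum]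
    exact Finset.sum_congr rfl fun i _ => by ring
  rw [hs, Finset.prod_range_one]
  ring

lemma CL_chain : ∀ (n : ℕ) (x : ℕ → R) (m : ℕ → ℕ) (a : ℕ → R) (p : ℕ → Ideal R),
    (∀ k, k ≤ n + 1 → (p k).IsPrime) → (∀ k, k ≤ n → p k ≤ p (k+1)) →
    (∀ i, i ≤ n → x i ∈ p (i+1)) → (∀ i, i ≤ n → x i ∉ p i) →
    CLsum x m a n ∈ p 0 → (1:R) ∈ p (n+1) := by
  intro n
  induction n with
  | zero =>
    intro x m a p hp hle hx1 hx2 h0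
    rw [CLsum_zero] at h0
    have h1 : a 0 * x 0 + 1 ∈ p 0 := by
      rcases (hp 0 (by omega)).mem_or_mem h0 with h | h
      · exact absurd ((hp 0 (by omega)).mem_of_pow_mem _ h) (hx2 0 le_rfl)
      · exact h
    have h2 : a 0 * x 0 + 1 ∈ p 1 := hle 0 le_rfl h1
    have h3 : a 0 * x 0 ∈ p 1 := Ideal.mul_mem_left _ _ (hx1 0 le_rfl)
    simpa using (Ideal.sub_mem _ h2 h3)
  | succ n ih =>
    intro x m a p hp hle hx1 hx2 h0
    rw [CLsum_succ] at h0
    have h1 : CLsum (fun i => x (i+1)) (fun i => m (i+1)) (fun i => a (i+1)) n + a 0 * x 0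
        ∈ p 0 := by
      rcases (hp 0 (by omega)).mem_or_mem h0 with h | h
      · exact absurd ((hp 0 (by omega)).mem_of_pow_mem _ h) (hx2 0 (by omega))
      · exact h
    have h2 : CLsum (fun i => x (i+1)) (fun i => m (i+1)) (fun i => a (i+1)) n ∈ p 1 := by
      have := Ideal.sub_mem _ (hle 0 (by omega) h1)
        (Ideal.mul_mem_left _ (a 0) (hx1 0 (by omega)))
      simpa using this
    have := ih (fun i => x (i+1)) (fun i => m (i+1)) (fun i => a (i+1)) (fun k => p (k+1))
      (fun k hk => hp (k+1) (by omega)) (fun k hk => hle (k+1) (by omega))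
      (fun i hi => hx1 (i+1) (by omega)) (fun i hi => hx2 (i+1) (by omega)) h2
    exact this

lemma ringKrullDim_le_of_CL (n : ℕ)
    (H : ∀ x : ℕ → R, ∃ m : ℕ → ℕ, ∃ a : ℕ → R, CLsum x m a n = 0) :
    ringKrullDim R ≤ n := by
  have key : ∀ c : LTSeries (PrimeSpectrum R), c.length ≤ n := by
    intro c
    by_contra hc
    push_neg at hc
    set q : ℕ → Ideal R := fun k => (c ⟨min k c.length, by omega⟩).asIdeal with hq
    have hprime : ∀ k, (q k).IsPrime := fun k => (c _).isPrime
    have hlt : ∀ i, i ≤ n → q i < q (i+1) := by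
      intro i hi
      have h1 : (⟨min i c.length, by omega⟩ : Fin (c.length + 1)) <
          ⟨min (i+1) c.length, by omega⟩ := by
        simp only [Fin.lt_def]
        omega
      exact c.strictMono h1
    have hex : ∀ i, i ≤ n → ∃ y, y ∈ q (i+1) ∧ y ∉ q i := by
      intro i hi
      obtain ⟨y, hy1, hy2⟩ := SetLike.exists_of_lt (hlt i hi)
      exact ⟨y, hy1, hy2⟩
    classical
    choose f hf1 hf2 using hex
    set x : ℕ → R := fun i => if h : i ≤ n then f i h else 0 with hx
    obtain ⟨m, a, hma⟩ := H x
    have h1 : (1:R) ∈ q (n+1) := by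
      apply CL_chain n x m a q (fun k _ => hprime k) (fun k hk => (hlt k hk).le)
      · intro i hi; simp only [hx, dif_pos hi]; exact hf1 i hi
      · intro i hi; simp only [hx, dif_pos hi]; exact hf2 i hi
      · rw [hma]; exact zero_mem _
    exact (hprime (n+1)).ne_top (Ideal.eq_top_iff_one _ |>.2 h1)
  rw [ringKrullDim, Order.krullDim]
  exact iSup_le fun c => by exact_mod_cast key c


lemma exists_CLsum_eq_zero_of_relation (K : Type*) [Field K] [Algebra K R]
    (n : ℕ) (x : ℕ → R) (Q : MvPolynomial (Fin (n+1)) K) (hQ : Q ≠ 0)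
    (hev : MvPolynomial.aeval (fun i : Fin (n+1) => x (i : ℕ)) Q = 0) :
    ∃ m : ℕ → ℕ, ∃ a : ℕ → R, CLsum x m a n = 0 := by
  classical
  have hsupp : Q.support.Nonempty := by
    rw [Finset.nonempty_iff_ne_empty]
    intro h
    exact hQ (MvPolynomial.support_eq_empty.1 h)
  obtain ⟨L0, hL0mem, hL0min⟩ : ∃ L0 ∈ Q.support.image (toLex : (Fin (n+1) →₀ ℕ) → _),
      ∀ L ∈ Q.support.image toLex, L0 ≤ L :=
    ⟨(Q.support.image toLex).min' (hsupp.image _), Finset.min'_mem _ _,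
      fun L hL => Finset.min'_le _ _ hL⟩
  obtain ⟨μ0, hμ0supp, hμ0L⟩ := Finset.mem_image.1 hL0mem
  have hmin : ∀ μ ∈ Q.support, μ ≠ μ0 → Finsupp.Lex (· < ·) (· < ·) μ0 μ := by
    intro μ hμ hne
    have h1 : L0 ≤ toLex μ := hL0min _ (Finset.mem_image_of_mem _ hμ)
    rw [← hμ0L] at h1
    have h2 : toLex μ0 ≠ toLex μ := fun h => hne (toLex.injective h).symm
    exact lt_of_le_of_ne h1 h2
  set c : K := MvPolynomial.coeff μ0 Q with hc
  have hc0 : c ≠ 0 := MvPolynomial.mem_support_iff.1 hμ0supp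
  set P : (Fin (n+1) →₀ ℕ) → Fin (n+1) := fun μ =>
    if h : ∃ j, (∀ d, d < j → μ0 d = μ d) ∧ μ0 j < μ j then h.choose else 0 with hP
  have hPspec : ∀ μ ∈ Q.support, μ ≠ μ0 →
      (∀ d, d < P μ → μ0 d = μ d) ∧ μ0 (P μ) < μ (P μ) := by
    intro μ hμ hne
    have h2 : ∃ j, (∀ d, d < j → μ0 d = μ d) ∧ μ0 j < μ j :=
      Finsupp.lex_def.1 (hmin μ hμ hne)
    have h3 : P μ = h2.choose := by rw [hP]; exact dif_pos h2
    rw [h3]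
    exact h2.choose_spec
  set m : ℕ → ℕ := fun j => if h : j < n+1 then μ0 ⟨j, h⟩ else 0 with hm
  set ev : (Fin (n+1) →₀ ℕ) → R := fun μ => ∏ i : Fin (n+1), x (i : ℕ) ^ μ i with hev2
  set r : (Fin (n+1) →₀ ℕ) → R := fun μ => ∏ i : Fin (n+1),
    x (i : ℕ) ^ (if i < P μ then 0 else if i = P μ then μ i - μ0 i - 1 else μ i) with hr
  set a : ℕ → R := fun t => if ht : t < n+1 then
    ∑ μ ∈ (Q.support.erase μ0).filter (fun μ => P μ = ⟨t, ht⟩),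
      algebraMap K R (MvPolynomial.coeff μ Q * c⁻¹) * r μ
    else 0 with ha
  refine ⟨m, a, ?_⟩
  have hPr : ∀ i : Fin (n+1), (∏ j ∈ Finset.range ((i:ℕ)+1), x j ^ m j)
      = ∏ j ∈ Finset.univ.filter (fun j : Fin (n+1) => j ≤ i), x (j:ℕ) ^ μ0 j := by
    intro i
    refine Finset.prod_bij' (i := fun (j : ℕ) (hj : j ∈ Finset.range ((i:ℕ)+1)) =>
        (⟨j, by have := Finset.mem_range.1 hj; omega⟩ : Fin (n+1)))
      (j := fun (j : Fin (n+1)) _ => (j : ℕ)) ?_ ?_ ?_ ?_ ?_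
    · intro j hj
      have hj' := Finset.mem_range.1 hj
      refine Finset.mem_filter.2 ⟨Finset.mem_univ _, ?_⟩
      exact Fin.le_def.2 (by simpa using Nat.lt_succ_iff.1 hj')
    · intro j hj
      have hj' := (Finset.mem_filter.1 hj).2
      exact Finset.mem_range.2 (show (j:ℕ) < (i:ℕ)+1 by have := Fin.le_def.1 hj'; omega)
    · intro j hj; rfl
    · intro j hj; rfl
    · intro j hj
      have hjlt : j < n+1 := by have := Finset.mem_range.1 hj; omega
      have hmj : m j = μ0 ⟨j, hjlt⟩ := by rw [hm]; exact dif_pos hjlt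
      rw [hmj]
  have hfull : (∏ j ∈ Finset.range (n+1), x j ^ m j) = ev μ0 := by
    rw [hev2, ← Fin.prod_univ_eq_prod_range (fun j => x j ^ m j) (n+1)]
    apply Finset.prod_congr rfl
    intro j _
    have hmj : m (j:ℕ) = μ0 j := by rw [hm]; exact dif_pos j.isLt
    rw [hmj]
  have hkey : ∀ μ ∈ Q.support.erase μ0,
      ev μ = (∏ j ∈ Finset.univ.filter (fun j : Fin (n+1) => j ≤ P μ), x (j:ℕ) ^ μ0 j)
        * (r μ * x ((P μ : ℕ))) := by
    intro μ hμe
    have hμs := Finset.mem_of_mem_erase hμe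
    have hne := Finset.ne_of_mem_erase hμe
    obtain ⟨hd1, hd2⟩ := hPspec μ hμs hne
    have hexp : ∀ j : Fin (n+1), μ j = (if j ≤ P μ then μ0 j else 0)
        + ((if j < P μ then 0 else if j = P μ then μ j - μ0 j - 1 else μ j)
          + (if j = P μ then 1 else 0)) := by
      intro j
      rcases lt_trichotomy j (P μ) with h | h | h
      · rw [if_pos h.le, if_pos h, if_neg h.ne]
        simp [← hd1 j h]
      · rw [if_pos h.le, if_neg (by rw [h]; exact lt_irrefl _), if_pos h, if_pos h]
        rw [h]
        omega
      · rw [if_neg (not_le.2 h), if_neg (asymm h), if_neg (ne_of_gt h), if_neg (ne_of_gt h)]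
        omega
    have e1 : (∏ j : Fin (n+1), x (j:ℕ) ^ (if j ≤ P μ then μ0 j else 0))
        = ∏ j ∈ Finset.univ.filter (fun j : Fin (n+1) => j ≤ P μ), x (j:ℕ) ^ μ0 j := by
      rw [Finset.prod_filter]
      apply Finset.prod_congr rfl
      intro j _
      split_ifs <;> simp
    have e3 : (∏ j : Fin (n+1), x (j:ℕ) ^ (if j = P μ then 1 else 0)) = x ((P μ : ℕ)) := by
      have hstep : ∀ j : Fin (n+1), x (j:ℕ) ^ (if j = P μ then 1 else 0)
          = if j = P μ then x (j:ℕ) else 1 := by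
        intro j; split_ifs <;> simp
      rw [Finset.prod_congr rfl (fun j _ => hstep j),
        Finset.prod_ite_eq' Finset.univ (P μ) (fun j => x (j:ℕ)),
        if_pos (Finset.mem_univ (P μ))]
    calc ev μ = ∏ j : Fin (n+1), x (j:ℕ) ^ μ j := by rw [hev2]
      _ = ∏ j : Fin (n+1), (x (j:ℕ) ^ (if j ≤ P μ then μ0 j else 0))
          * ((x (j:ℕ) ^ (if j < P μ then 0 else if j = P μ then μ j - μ0 j - 1 else μ j))
            * (x (j:ℕ) ^ (if j = P μ then 1 else 0))) :=
        Finset.prod_congr rfl (fun j _ => by rw [← pow_add, ← pow_add, ← hexp j])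
      _ = (∏ j : Fin (n+1), x (j:ℕ) ^ (if j ≤ P μ then μ0 j else 0))
          * ((∏ j : Fin (n+1), x (j:ℕ) ^ (if j < P μ then 0 else if j = P μ then μ j - μ0 j - 1 else μ j))
            * (∏ j : Fin (n+1), x (j:ℕ) ^ (if j = P μ then 1 else 0))) := by
        rw [Finset.prod_mul_distrib]
        try rw [Finset.prod_mul_distrib]
      _ = _ := by rw [e1, e3, hr]
  have hsum : (0:R) = ∑ μ ∈ Q.support, algebraMap K R (MvPolynomial.coeff μ Q * c⁻¹) * ev μ := by
    have h1 : MvPolynomial.aeval (fun i : Fin (n+1) => x (i : ℕ)) Q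
        = ∑ μ ∈ Q.support, algebraMap K R (MvPolynomial.coeff μ Q) * ev μ := by
      rw [MvPolynomial.aeval_def, MvPolynomial.eval₂_eq']
      try rfl
    have h2 := congrArg (fun y => algebraMap K R c⁻¹ * y) (h1.symm.trans hev)
    simp only [mul_zero] at h2
    rw [Finset.mul_sum] at h2
    rw [← h2]
    apply Finset.sum_congr rfl
    intro μ _
    rw [map_mul]
    ring
  rw [CLsum]
  have houter : (∑ i ∈ Finset.range (n+1), (∏ j ∈ Finset.range (i+1), x j ^ m j) * (a i * x i))
      = ∑ i : Fin (n+1), (∏ j ∈ Finset.univ.filter (fun j : Fin (n+1) => j ≤ i), x (j:ℕ) ^ μ0 j)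
        * (a (i:ℕ) * x (i:ℕ)) := by
    rw [← Fin.sum_univ_eq_sum_range
      (fun i => (∏ j ∈ Finset.range (i+1), x j ^ m j) * (a i * x i)) (n+1)]
    apply Finset.sum_congr rfl
    intro i _
    rw [hPr i]
  rw [houter, hfull]
  have hinner : ∀ i : Fin (n+1),
      (∏ j ∈ Finset.univ.filter (fun j : Fin (n+1) => j ≤ i), x (j:ℕ) ^ μ0 j)
        * (a (i:ℕ) * x (i:ℕ))
      = ∑ μ ∈ (Q.support.erase μ0).filter (fun μ => P μ = i),
          algebraMap K R (MvPolynomial.coeff μ Q * c⁻¹) * ev μ := by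
    intro i
    have hai : a (i:ℕ) = ∑ μ ∈ (Q.support.erase μ0).filter (fun μ => P μ = i),
        algebraMap K R (MvPolynomial.coeff μ Q * c⁻¹) * r μ := by
      rw [ha]
      simp only [dif_pos i.isLt]
    rw [hai, Finset.sum_mul, Finset.mul_sum]
    apply Finset.sum_congr rfl
    intro μ hμ
    have hμfilter := Finset.mem_filter.1 hμ
    have hPμ : P μ = i := hμfilter.2
    rw [hkey μ hμfilter.1, hPμ]
    ring
  rw [Finset.sum_congr rfl (fun i _ => hinner i)]
  rw [Finset.sum_fiberwise_of_maps_to (fun μ _ => Finset.mem_univ (P μ))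
    (fun μ => algebraMap K R (MvPolynomial.coeff μ Q * c⁻¹) * ev μ)]
  have hμ0term : algebraMap K R (MvPolynomial.coeff μ0 Q * c⁻¹) * ev μ0 = ev μ0 := by
    rw [← hc, mul_inv_cancel₀ hc0, map_one, one_mul]
  calc (∑ μ ∈ Q.support.erase μ0, algebraMap K R (MvPolynomial.coeff μ Q * c⁻¹) * ev μ) + ev μ0
      = (algebraMap K R (MvPolynomial.coeff μ0 Q * c⁻¹) * ev μ0)
        + ∑ μ ∈ Q.support.erase μ0, algebraMap K R (MvPolynomial.coeff μ Q * c⁻¹) * ev μ := by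
        rw [hμ0term]; ring
    _ = ∑ μ ∈ Q.support, algebraMap K R (MvPolynomial.coeff μ Q * c⁻¹) * ev μ :=
        Finset.add_sum_erase _ (fun μ => algebraMap K R (MvPolynomial.coeff μ Q * c⁻¹) * ev μ) hμ0supp
    _ = 0 := hsum.symm

end CLPart

section DepPart
variable (K : Type*) [Field K]


lemma exists_algebraic_relation (σ : Type*) [Fintype σ] (n : ℕ) (hn : Fintype.card σ = n)
    (x : Fin (n + 1) → MvPolynomial σ K) :
    ∃ Q : MvPolynomial (Fin (n + 1)) K, Q ≠ 0 ∧ MvPolynomial.aeval x Q = 0 := by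
  classical
  by_contra hcon
  push_neg at hcon
  set D := (Finset.univ.sup fun i => (x i).totalDegree) + 1 with hD
  have hxD : ∀ i, (x i).totalDegree ≤ D := by
    intro i
    rw [hD]
    exact le_trans (Finset.le_sup (f := fun i => (x i).totalDegree) (Finset.mem_univ i))
      (Nat.le_succ _)
  set E := (n+1)*D + 1 with hE
  set d := E^n with hd
  set B := (n+1)*d*D with hB
  set M : (Fin (n+1) → Fin (d+1)) → MvPolynomial σ K :=
    fun μ => ∏ i, x i ^ (μ i : ℕ) with hM
  set T : Finset (σ →₀ ℕ) := Finset.image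
    (fun f : σ → Fin (B+1) => Finsupp.equivFunOnFinite.symm (fun s => (f s : ℕ)))
    Finset.univ with hT
  set TM : Finset (MvPolynomial σ K) := T.image (fun ν => MvPolynomial.monomial ν (1:K))
    with hTM
  set W : Submodule K (MvPolynomial σ K) := Submodule.span K (TM : Set (MvPolynomial σ K))
    with hW
  -- any polynomial of total degree ≤ B is in W
  have hWmem : ∀ P : MvPolynomial σ K, P.totalDegree ≤ B → P ∈ W := by
    intro P hP
    rw [← MvPolynomial.support_sum_monomial_coeff P]
    apply Submodule.sum_mem
    intro ν hν
    have h1 : (MvPolynomial.monomial ν (MvPolynomial.coeff ν P))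
        = (MvPolynomial.coeff ν P) • (MvPolynomial.monomial ν (1:K)) := by
      rw [MvPolynomial.smul_monomial, smul_eq_mul, mul_one]
    rw [h1]
    apply Submodule.smul_mem
    apply Submodule.subset_span
    simp only [hTM, Finset.coe_image, Set.mem_image]
    refine ⟨ν, ?_, rfl⟩
    simp only [hT, Finset.mem_coe, Finset.mem_image]
    have hle : ∀ s, ν s ≤ B := by
      intro s
      have h2 : (ν.sum fun _ e => e) ≤ P.totalDegree := MvPolynomial.le_totalDegree hν
      have h3 : ν s ≤ ν.sum fun _ e => e := by
        by_cases hs : s ∈ ν.support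
        · exact Finset.single_le_sum (fun _ _ => Nat.zero_le _) hs
        · simp [Finsupp.notMem_support_iff.1 hs]
      omega
    refine ⟨fun s => ⟨ν s, by have := hle s; omega⟩, Finset.mem_univ _, ?_⟩
    apply Finsupp.equivFunOnFinite.symm_apply_eq.2
    funext s
    rfl
  have hMdeg : ∀ μ, (M μ).totalDegree ≤ B := by
    intro μ
    calc (M μ).totalDegree ≤ ∑ i, (x i ^ (μ i : ℕ)).totalDegree :=
          MvPolynomial.totalDegree_finset_prod _ _
      _ ≤ ∑ i : Fin (n+1), d * D := by
          apply Finset.sum_le_sum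
          intro i _
          calc (x i ^ (μ i : ℕ)).totalDegree ≤ (μ i : ℕ) * (x i).totalDegree :=
                MvPolynomial.totalDegree_pow _ _
            _ ≤ d * D := Nat.mul_le_mul (by omega) (hxD i)
      _ = (n+1) * (d * D) := by rw [Finset.sum_const, Finset.card_univ, Fintype.card_fin,
            smul_eq_mul]
      _ = B := by rw [hB]; ring
  have hMmemW : ∀ μ, M μ ∈ W := fun μ => hWmem _ (hMdeg μ)
  -- the finsupp associated to an exponent vector
  set fsOf : (Fin (n+1) → Fin (d+1)) → (Fin (n+1) →₀ ℕ) :=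
    fun μ => Finsupp.equivFunOnFinite.symm (fun i => (μ i : ℕ)) with hfsOf
  have hfs_apply : ∀ μ i, fsOf μ i = (μ i : ℕ) := fun μ i => rfl
  have hfs_inj : Function.Injective fsOf := by
    intro μ1 μ2 h
    funext i
    have := congrArg (fun f => f i) h
    simp only [hfs_apply] at this
    exact Fin.ext this
  -- linear independence
  have hLI : LinearIndependent K M := by
    rw [Fintype.linearIndependent_iff]
    intro g hg
    set Q : MvPolynomial (Fin (n+1)) K :=
      ∑ μ : Fin (n+1) → Fin (d+1), MvPolynomial.monomial (fsOf μ) (g μ) with hQ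
    have hev : MvPolynomial.aeval x Q = ∑ μ : Fin (n+1) → Fin (d+1), g μ • M μ := by
      rw [hQ, map_sum]
      apply Finset.sum_congr rfl
      intro μ _
      rw [MvPolynomial.aeval_monomial, Algebra.smul_def]
      congr 1
      rw [Finsupp.prod_fintype _ _ (fun i => pow_zero (x i))]
      rfl
    have hQ0 : Q = 0 := by
      by_contra hne
      exact hcon Q hne (by rw [hev, hg])
    intro i
    have : MvPolynomial.coeff (fsOf i) Q = g i := by
      rw [hQ, MvPolynomial.coeff_sum]
      rw [Finset.sum_eq_single_of_mem i (Finset.mem_univ i)]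
      · rw [MvPolynomial.coeff_monomial, if_pos rfl]
      · intro μ _ hμ
        rw [MvPolynomial.coeff_monomial, if_neg (fun h => hμ (hfs_inj h))]
    rw [hQ0] at this
    simpa using this.symm
  -- counting
  haveI : FiniteDimensional K W := FiniteDimensional.span_finset K TM
  have hcard : Fintype.card (Fin (n+1) → Fin (d+1)) ≤ Module.finrank K W := by
    set M' : (Fin (n+1) → Fin (d+1)) → W := fun μ => ⟨M μ, hMmemW μ⟩ with hM'
    have : LinearIndependent K M' := by
      apply LinearIndependent.of_comp W.subtype
      exact hLI
    exact this.fintype_card_le_finrank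
  have h1 : Module.finrank K W ≤ TM.card := finrank_span_finset_le_card TM
  have h2 : TM.card ≤ T.card := Finset.card_image_le
  have h3 : T.card ≤ (B+1)^n := by
    calc T.card ≤ (Finset.univ : Finset (σ → Fin (B+1))).card := Finset.card_image_le
      _ = (B+1)^n := by rw [Finset.card_univ, Fintype.card_fun, Fintype.card_fin, hn]
  have h4 : Fintype.card (Fin (n+1) → Fin (d+1)) = (d+1)^(n+1) := by
    rw [Fintype.card_fun]; simp
  have h5 : (B+1) ≤ E * (d+1) := by rw [hB, hE]; nlinarith
  have h6 : (B+1)^n ≤ (E*(d+1))^n := Nat.pow_le_pow_left h5 n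
  have h7 : (E*(d+1))^n = d * (d+1)^n := by rw [mul_pow, hd]
  have h8 : d * (d+1)^n < (d+1)^(n+1) := by
    have hp : 0 < (d+1)^n := pow_pos (by omega) n
    rw [pow_succ]
    nlinarith
  omega

end DepPart

section KillPart
variable (K : Type*) [Field K] {V : Type*}


/-- The algebra hom killing all variables outside `S`. -/
noncomputable def killTo (S : Set V) : MvPolynomial V K →ₐ[K] MvPolynomial ↥S K :=
  MvPolynomial.aeval (fun v => if h : v ∈ S then MvPolynomial.X ⟨v, h⟩ else 0)

/-- The ideal generated by the variables in `T`. -/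
noncomputable def vIdeal (T : Set V) : Ideal (MvPolynomial V K) :=
  Ideal.span ((MvPolynomial.X : V → MvPolynomial V K) '' T)

lemma killTo_X_mem (S : Set V) (v : V) (hv : v ∈ S) :
    killTo K S (MvPolynomial.X v) = MvPolynomial.X ⟨v, hv⟩ := by
  simp [killTo, hv]

lemma killTo_X_not_mem (S : Set V) (v : V) (hv : v ∉ S) :
    killTo K S (MvPolynomial.X v) = 0 := by
  simp [killTo, hv]

lemma killTo_rename (S : Set V) (p : MvPolynomial ↥S K) :
    killTo K S (MvPolynomial.rename Subtype.val p) = p := by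
  show (killTo K S).comp (MvPolynomial.rename (Subtype.val : ↥S → V)) p = p
  rw [show (killTo K S).comp (MvPolynomial.rename (Subtype.val : ↥S → V)) =
    AlgHom.id K _ from ?_]
  · rfl
  · apply MvPolynomial.algHom_ext
    intro s
    simp only [AlgHom.comp_apply, MvPolynomial.rename_X, AlgHom.id_apply]
    rw [killTo_X_mem K S s.1 s.2]

lemma killTo_surjective (S : Set V) : Function.Surjective (killTo K S) :=
  fun p => ⟨MvPolynomial.rename Subtype.val p, killTo_rename K S p⟩

lemma ker_killTo (S : Set V) :
    RingHom.ker (killTo K S : MvPolynomial V K →ₐ[K] MvPolynomial ↥S K).toRingHom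
      = vIdeal K Sᶜ := by
  apply le_antisymm
  · intro P hP
    have hP0 : killTo K S P = 0 := hP
    have key : (Ideal.Quotient.mkₐ K (vIdeal K Sᶜ)) =
        ((Ideal.Quotient.mkₐ K (vIdeal K Sᶜ)).comp
          ((MvPolynomial.rename (Subtype.val : ↥S → V)).comp (killTo K S))) := by
      apply MvPolynomial.algHom_ext
      intro v
      by_cases hv : v ∈ S
      · simp only [AlgHom.comp_apply, killTo_X_mem K S v hv, MvPolynomial.rename_X]
      · simp only [AlgHom.comp_apply, killTo_X_not_mem K S v hv, map_zero]
        rw [Ideal.Quotient.mkₐ_eq_mk, Ideal.Quotient.eq_zero_iff_mem]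
        exact Ideal.subset_span ⟨v, hv, rfl⟩
    have := congrArg (fun f => f P) key
    simp only [AlgHom.comp_apply, hP0, map_zero] at this
    rw [Ideal.Quotient.mkₐ_eq_mk] at this
    rw [← Ideal.Quotient.eq_zero_iff_mem]
    exact this
  · rw [vIdeal, Ideal.span_le]
    rintro _ ⟨v, hv, rfl⟩
    show killTo K S (MvPolynomial.X v) = 0
    exact killTo_X_not_mem K S v hv

/-- Quotient by the variable ideal is a polynomial ring on the complement. -/
noncomputable def vIdealQuotEquiv (T : Set V) :
    (MvPolynomial V K ⧸ vIdeal K T) ≃+* MvPolynomial ↥(Tᶜ) K :=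
  (Ideal.quotEquivOfEq (show vIdeal K T = RingHom.ker (killTo K Tᶜ).toRingHom by
      rw [ker_killTo K Tᶜ, compl_compl])).trans
    (RingHom.quotientKerEquivOfSurjective (killTo_surjective K Tᶜ))

lemma vIdeal_isPrime (T : Set V) : (vIdeal K T).IsPrime := by
  rw [← Ideal.Quotient.isDomain_iff_prime]
  exact Function.Injective.isDomain (vIdealQuotEquiv K T).toRingHom
    (vIdealQuotEquiv K T).injective

lemma X_mem_vIdeal_iff (T : Set V) (v : V) :
    MvPolynomial.X v ∈ vIdeal K T ↔ v ∈ T := by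
  constructor
  · intro h
    by_contra hv
    have h2 : MvPolynomial.X v ∈ RingHom.ker (killTo K Tᶜ :
        MvPolynomial V K →ₐ[K] MvPolynomial ↥(Tᶜ) K).toRingHom := by
      rw [ker_killTo, compl_compl]; exact h
    rw [RingHom.mem_ker] at h2
    have h3 : killTo K Tᶜ (MvPolynomial.X v) = 0 := h2
    rw [killTo_X_mem K Tᶜ v hv] at h3
    exact MvPolynomial.X_ne_zero _ h3
  · intro h
    exact Ideal.subset_span ⟨v, h, rfl⟩

lemma primeSpectrum_lt_of_asIdeal_lt {R : Type*} [CommRing R] {x y : PrimeSpectrum R}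
    (h : x.asIdeal < y.asIdeal) : x < y :=
  lt_of_le_of_ne h.le (fun e => h.ne (congrArg PrimeSpectrum.asIdeal e))

lemma card_le_ringKrullDim_mvPolynomial (σ : Type*) [Fintype σ] :
    (Fintype.card σ : WithBot (WithTop ℕ)) ≤ ringKrullDim (MvPolynomial σ K) := by
  classical
  set n := Fintype.card σ with hn
  set e := (Fintype.equivFin σ).symm with he
  set T : Fin (n+1) → Set σ := fun i => {v | ((e.symm v : Fin n) : ℕ) < (i : ℕ)} with hT
  have hTmono : ∀ i : Fin n, T i.castSucc ⊆ T i.succ := by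
    intro i v hv
    simp only [hT, Set.mem_setOf_eq, Fin.coe_castSucc, Fin.val_succ] at hv ⊢
    omega
  have hmem : ∀ i : Fin n, e i ∈ T i.succ ∧ e i ∉ T i.castSucc := by
    intro i
    constructor <;> simp [hT]
  have hstep : ∀ i : Fin n, vIdeal K (T i.castSucc) < vIdeal K (T i.succ) := by
    intro i
    apply lt_of_le_of_ne
    · exact Ideal.span_mono (Set.image_mono (hTmono i))
    · intro hEq
      have h1 : MvPolynomial.X (e i) ∈ vIdeal K (T i.succ) :=
        (X_mem_vIdeal_iff K _ _).2 (hmem i).1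
      rw [← hEq, X_mem_vIdeal_iff] at h1
      exact (hmem i).2 h1
  let c : LTSeries (PrimeSpectrum (MvPolynomial σ K)) :=
    ⟨n, fun i => ⟨vIdeal K (T i), vIdeal_isPrime K _⟩,
      fun i => primeSpectrum_lt_of_asIdeal_lt (hstep i)⟩
  have := Order.LTSeries.length_le_krullDim c
  rw [ringKrullDim]
  exact_mod_cast this

end KillPart

section MainAux
variable (K : Type*) [Field K] {V : Type*} [Fintype V] (G : SimpleGraph V)

variable (K : Type*) [Field K] {V : Type*} [Fintype V] (G : SimpleGraph V)

theorem ringKrullDim_mvPolynomial_le (σ : Type*) [Fintype σ] :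
    ringKrullDim (MvPolynomial σ K) ≤ (Fintype.card σ : WithBot (WithTop ℕ)) := by
  apply ringKrullDim_le_of_CL (Fintype.card σ)
  intro x
  obtain ⟨Q, hQ0, hQev⟩ := exists_algebraic_relation K σ (Fintype.card σ) rfl
    (fun i => x (i : ℕ))
  exact exists_CLsum_eq_zero_of_relation K (Fintype.card σ) x Q hQ0 hQev

lemma indep_bddAbove :
    BddAbove {n : ℕ | ∃ s : Finset V, s.card = n ∧ ∀ v ∈ s, ∀ w ∈ s, ¬ G.Adj v w} :=
  ⟨Fintype.card V, fun n ⟨s, hs, _⟩ => hs ▸ Finset.card_le_univ s⟩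

lemma card_le_indepNum {s : Finset V} (hs : ∀ v ∈ s, ∀ w ∈ s, ¬ G.Adj v w) :
    s.card ≤ G.indepNumOld :=
  le_csSup (indep_bddAbove G) ⟨s, rfl, hs⟩

theorem ringKrullDim_edgeIdeal_le :
    ringKrullDim (MvPolynomial V K ⧸ G.edgeIdeal K) ≤ (G.indepNumOld : WithBot (WithTop ℕ)) := by
  have key : ∀ c : LTSeries (PrimeSpectrum (MvPolynomial V K ⧸ G.edgeIdeal K)),
      c.length ≤ G.indepNumOld := by
    intro c
    set mk := Ideal.Quotient.mk (G.edgeIdeal K) with hmk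
    set q : Fin (c.length+1) → Ideal (MvPolynomial V K) :=
      fun i => (c i).asIdeal.comap mk with hq
    haveI hqprime : ∀ i, (q i).IsPrime := fun i => Ideal.IsPrime.comap _
    have hqmono : ∀ i j : Fin (c.length+1), i < j → q i < q j := by
      intro i j hij
      have hle : q i ≤ q j := Ideal.comap_mono (c.strictMono hij).le
      refine lt_of_le_of_ne hle (fun hEq => ?_)
      have := Ideal.comap_injective_of_surjective mk Ideal.Quotient.mk_surjective hEq
      exact (c.strictMono hij).ne (PrimeSpectrum.ext this)
    have hq0le : ∀ i, q 0 ≤ q i := by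
      intro i
      rcases eq_or_lt_of_le (Fin.zero_le i) with h | h
      · rw [← h]
      · exact (hqmono 0 i h).le
    have hqI : ∀ i, G.edgeIdeal K ≤ q i := by
      intro i y hy
      show mk y ∈ (c i).asIdeal
      rw [Ideal.Quotient.eq_zero_iff_mem.2 hy]
      exact zero_mem _
    set C : Set V := {v | MvPolynomial.X v ∈ q 0} with hC
    set S : Set V := Cᶜ with hS
    have hSindep : ∀ u ∈ S, ∀ w ∈ S, ¬ G.Adj u w := by
      intro u hu w hw hadj
      have hmem : MvPolynomial.X u * MvPolynomial.X w ∈ q 0 :=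
        hqI 0 (Ideal.subset_span ⟨u, w, hadj, rfl⟩)
      rcases (hqprime 0).mem_or_mem hmem with h | h
      · exact hu h
      · exact hw h
    set φ := (killTo K S : MvPolynomial V K →ₐ[K] MvPolynomial ↥S K).toRingHom with hφ
    have hφsurj : Function.Surjective φ := killTo_surjective K S
    have hker : ∀ i, RingHom.ker φ ≤ q i := by
      intro i
      rw [hφ, ker_killTo K S, hS, compl_compl, vIdeal, Ideal.span_le]
      rintro _ ⟨v, hv, rfl⟩
      exact hq0le i hv
    set t : Fin (c.length+1) → PrimeSpectrum (MvPolynomial ↥S K) :=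
      fun i => ⟨(q i).map φ,
        Ideal.map_isPrime_of_surjective hφsurj (hker i)⟩ with ht
    have htmono : ∀ i j, i < j → t i < t j := by
      intro i j hij
      have hle : (q i).map φ ≤ (q j).map φ := Ideal.map_mono (hqmono i j hij).le
      have hne : (q i).map φ ≠ (q j).map φ := by
        intro hEq
        have h1 := congrArg (Ideal.comap φ) hEq
        rw [Ideal.comap_map_of_surjective φ hφsurj, Ideal.comap_map_of_surjective φ hφsurj]
          at h1
        rw [← RingHom.ker_eq_comap_bot, sup_eq_left.2 (hker i), sup_eq_left.2 (hker j)] at h1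
        exact (hqmono i j hij).ne h1
      exact lt_of_le_of_ne (show t i ≤ t j from hle) (fun e => hne (congrArg
        PrimeSpectrum.asIdeal e))
    let c' : LTSeries (PrimeSpectrum (MvPolynomial ↥S K)) :=
      ⟨c.length, t, fun i => htmono _ _ Fin.castSucc_lt_succ⟩
    have h1 := Order.LTSeries.length_le_krullDim c'
    have h2 : ringKrullDim (MvPolynomial ↥S K) ≤ (Fintype.card ↥S : WithBot (WithTop ℕ)) :=
      ringKrullDim_mvPolynomial_le K ↥S
    have h3 : (c.length : WithBot (WithTop ℕ)) ≤ (Fintype.card ↥S : WithBot (WithTop ℕ)) := by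
      refine le_trans ?_ h2
      rw [ringKrullDim]
      exact h1
    have h4 : c.length ≤ Fintype.card ↥S := by exact_mod_cast h3
    have h5 : Fintype.card ↥S = S.toFinset.card := (Set.toFinset_card S).symm
    have h6 : S.toFinset.card ≤ G.indepNumOld := by
      apply card_le_indepNum
      intro v hv w hw
      exact hSindep v (Set.mem_toFinset.1 hv) w (Set.mem_toFinset.1 hw)
    omega
  rw [ringKrullDim, Order.krullDim]
  exact iSup_le fun c => by exact WithBot.coe_le_coe.2 (WithTop.coe_le_coe.2 (key c))

theorem indepNum_le_ringKrullDim_edgeIdeal :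
    (G.indepNumOld : WithBot (WithTop ℕ)) ≤ ringKrullDim (MvPolynomial V K ⧸ G.edgeIdeal K) := by
  have hne : {n : ℕ | ∃ s : Finset V, s.card = n ∧ ∀ v ∈ s, ∀ w ∈ s, ¬ G.Adj v w}.Nonempty :=
    ⟨0, ∅, by simp, by simp⟩
  have hmem : G.indepNumOld ∈ {n : ℕ | ∃ s : Finset V, s.card = n ∧ ∀ v ∈ s, ∀ w ∈ s, ¬ G.Adj v w} :=
    Nat.sSup_mem hne (indep_bddAbove G)
  obtain ⟨s, hcard, hindep⟩ := hmem
  set S : Set V := ↑s with hSdef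
  have hIker : ∀ p ∈ G.edgeIdeal K, (killTo K S).toRingHom p = 0 := by
    intro p hp
    have : G.edgeIdeal K ≤ RingHom.ker (killTo K S).toRingHom := by
      rw [SimpleGraph.edgeIdeal, Ideal.span_le]
      rintro _ ⟨u, w, hadj, rfl⟩
      show killTo K S (MvPolynomial.X u * MvPolynomial.X w) = 0
      rw [map_mul]
      by_cases hu : u ∈ S
      · have hw : w ∉ S := by
          intro hw
          exact hindep u (Finset.mem_coe.1 hu) w (Finset.mem_coe.1 hw) hadj
        rw [killTo_X_not_mem K S w hw, mul_zero]
      · rw [killTo_X_not_mem K S u hu, zero_mul]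
    exact this hp
  set lift := Ideal.Quotient.lift (G.edgeIdeal K) (killTo K S).toRingHom hIker with hlift
  have hsurj : Function.Surjective lift := by
    intro y
    obtain ⟨p, hp⟩ := killTo_surjective K S y
    exact ⟨Ideal.Quotient.mk _ p, by rw [hlift, Ideal.Quotient.lift_mk]; exact hp⟩
  have h1 := ringKrullDim_le_of_surjective lift hsurj
  have h2 := card_le_ringKrullDim_mvPolynomial K ↥S
  have h3 : Fintype.card ↥S = s.card := by
    show Fintype.card ↥(↑s : Set V) = s.card
    simp
  calc (G.indepNumOld : WithBot ℕ∞) = (Fintype.card ↥S : WithBot ℕ∞) := by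
        rw [h3, hcard]
    _ ≤ ringKrullDim (MvPolynomial ↥S K) := h2
    _ ≤ ringKrullDim (MvPolynomial V K ⧸ G.edgeIdeal K) := h1

theorem ringKrullDim_edgeIdeal_eq :
    ringKrullDim (MvPolynomial V K ⧸ G.edgeIdeal K) = (G.indepNumOld : WithBot (WithTop ℕ)) :=
  le_antisymm (ringKrullDim_edgeIdeal_le K G) (indepNum_le_ringKrullDim_edgeIdeal K G)

end MainAux

section CombAux
section Comb
variable {V : Type*} [Fintype V]

lemma indepNum_le_of_forall (G : SimpleGraph V) (n : ℕ)
    (h : ∀ s : Finset V, (∀ v ∈ s, ∀ w ∈ s, ¬ G.Adj v w) → s.card ≤ n) :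
    G.indepNumOld ≤ n :=
  csSup_le ⟨0, ∅, by simp, by simp⟩ (fun k ⟨s, hc, hi⟩ => hc ▸ h s hi)

lemma exists_max_indep (G : SimpleGraph V) :
    ∃ s : Finset V, s.card = G.indepNumOld ∧ ∀ v ∈ s, ∀ w ∈ s, ¬ G.Adj v w := by
  have hmem : G.indepNumOld ∈ {n : ℕ | ∃ s : Finset V, s.card = n ∧ ∀ v ∈ s, ∀ w ∈ s, ¬ G.Adj v w} :=
    Nat.sSup_mem ⟨0, ∅, by simp, by simp⟩ (indep_bddAbove G)
  obtain ⟨s, hc, hi⟩ := hmem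
  exact ⟨s, hc, hi⟩
end Comb

section Corona
variable {α β : Type*} [Fintype α] [Fintype β] [Nonempty β]

lemma one_le_indepNum (H : SimpleGraph β) : 1 ≤ H.indepNumOld := by
  have hb : β := Classical.arbitrary β
  set b := hb with hbdef
  have := card_le_indepNum H (s := {b}) (by
    intro v hv w hw
    rw [Finset.mem_singleton] at hv hw
    subst hv; subst hw
    exact H.irrefl)
  simpa using this

lemma corona_indepNum (X : SimpleGraph α) (H : SimpleGraph β) :
    (X.corona H).indepNumOld = Fintype.card α * H.indepNumOld := by
  apply le_antisymm
  · apply indepNum_le_of_forall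
    intro F hF
    have hsplit : F.card = ∑ i : α, (F.filter (fun z => Sum.elim id Prod.fst z = i)).card :=
      Finset.card_eq_sum_card_fiberwise (fun z _ => Finset.mem_univ _)
    rw [hsplit]
    have hbound : ∀ i : α, (F.filter (fun z => Sum.elim id Prod.fst z = i)).card
        ≤ H.indepNumOld := by
      intro i
      by_cases hinl : Sum.inl i ∈ F
      · have hsub : F.filter (fun z => Sum.elim id Prod.fst z = i) ⊆ {Sum.inl i} := by
          intro z hz
          obtain ⟨hzF, hzkey⟩ := Finset.mem_filter.1 hz
          rcases z with j | p
          · simp only [Sum.elim_inl, id] at hzkey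
            subst hzkey
            exact Finset.mem_singleton_self _
          · simp only [Sum.elim_inr] at hzkey
            exfalso
            apply hF (Sum.inl i) hinl (Sum.inr p) hzF
            show i = p.1
            exact hzkey.symm
        calc (F.filter _).card ≤ ({Sum.inl i} : Finset (α ⊕ α × β)).card :=
              Finset.card_le_card hsub
          _ = 1 := Finset.card_singleton _
          _ ≤ H.indepNumOld := one_le_indepNum H
      · set fib := F.filter (fun z => Sum.elim id Prod.fst z = i) with hfib
        have hform : ∀ z ∈ fib, ∃ b : β, z = Sum.inr (i, b) := by
          intro z hz
          obtain ⟨hzF, hzkey⟩ := Finset.mem_filter.1 hz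
          rcases z with j | p
          · simp only [Sum.elim_inl, id] at hzkey
            subst hzkey
            exact absurd hzF hinl
          · simp only [Sum.elim_inr] at hzkey
            exact ⟨p.2, by rw [← hzkey]⟩
        set t : Finset β := fib.image
          (fun z => Sum.elim (fun _ => Classical.arbitrary β) Prod.snd z) with ht
        have hcard : fib.card = t.card := by
          rw [ht]
          rw [Finset.card_image_of_injOn]
          intro z1 hz1 z2 hz2 hEq
          obtain ⟨b1, rfl⟩ := hform z1 hz1
          obtain ⟨b2, rfl⟩ := hform z2 hz2
          simp only [Sum.elim_inr] at hEq
          rw [hEq]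
        have htindep : ∀ v ∈ t, ∀ w ∈ t, ¬ H.Adj v w := by
          intro v hv w hw hadj
          obtain ⟨z1, hz1, hz1e⟩ := Finset.mem_image.1 hv
          obtain ⟨z2, hz2, hz2e⟩ := Finset.mem_image.1 hw
          obtain ⟨b1, rfl⟩ := hform z1 hz1
          obtain ⟨b2, rfl⟩ := hform z2 hz2
          simp only [Sum.elim_inr] at hz1e hz2e
          subst hz1e; subst hz2e
          exact hF _ (Finset.mem_filter.1 hz1).1 _ (Finset.mem_filter.1 hz2).1
            ⟨rfl, hadj⟩
        rw [hcard]
        exact card_le_indepNum H htindep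
    calc (∑ i : α, (F.filter (fun z => Sum.elim id Prod.fst z = i)).card)
        ≤ ∑ _i : α, H.indepNumOld := Finset.sum_le_sum (fun i _ => hbound i)
      _ = Fintype.card α * H.indepNumOld := by
          rw [Finset.sum_const, Finset.card_univ, smul_eq_mul]
  · obtain ⟨sH, hsHcard, hsHindep⟩ := exists_max_indep H
    have := card_le_indepNum (X.corona H)
      (s := (Finset.univ ×ˢ sH).image Sum.inr) (by
        intro v hv w hw hadj
        obtain ⟨p, hp, rfl⟩ := Finset.mem_image.1 hv
        obtain ⟨q, hq, rfl⟩ := Finset.mem_image.1 hw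
        have h2 : H.Adj p.2 q.2 := hadj.2
        exact hsHindep p.2 (Finset.mem_product.1 hp).2 q.2 (Finset.mem_product.1 hq).2 h2)
    calc Fintype.card α * H.indepNumOld = ((Finset.univ ×ˢ sH).image Sum.inr).card := by
          rw [Finset.card_image_of_injective _ Sum.inr_injective, Finset.card_product,
            Finset.card_univ, hsHcard]
      _ ≤ (X.corona H).indepNumOld := this
end Corona

section NonIso
variable {β : Type*} [Fintype β]

lemma indepNum_eq_nonIso_add_iso (H : SimpleGraph β) :
    H.indepNumOld = H.nonIsolatedPart.indepNumOld + H.isolatedVerts.ncard := by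
  have hncard : H.isolatedVerts.ncard = H.isolatedVerts.toFinset.card :=
    Set.ncard_eq_toFinset_card' _
  have hisoC : ∀ v : β, v ∈ H.isolatedVerts ↔ ¬ (∃ w, H.Adj v w) := by
    intro v
    constructor
    · rintro hv ⟨w, hw⟩; exact hv w hw
    · intro hv w hw; exact hv ⟨w, hw⟩
  apply le_antisymm
  · apply indepNum_le_of_forall
    intro s hs
    have hsplit := Finset.card_filter_add_card_filter_not
      (s := s) (p := fun v => v ∈ {v : β | ∃ w, H.Adj v w})
    set sNI := s.filter (fun v => v ∈ {v : β | ∃ w, H.Adj v w}) with hsNI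
    set sIso := s.filter (fun v => ¬ v ∈ {v : β | ∃ w, H.Adj v w}) with hsIso
    have h1 : sIso.card ≤ H.isolatedVerts.toFinset.card := by
      apply Finset.card_le_card
      intro v hv
      rw [Set.mem_toFinset]
      exact (hisoC v).2 (Finset.mem_filter.1 hv).2
    have h2 : sNI.card ≤ H.nonIsolatedPart.indepNumOld := by
      set t : Finset {v : β | ∃ w, H.Adj v w} := s.subtype _ with htdef
      have hcards : t.card = sNI.card := Finset.card_subtype _ _
      rw [← hcards]
      apply card_le_indepNum
      intro v hv w hw hadj
      have hv' := Finset.mem_subtype.1 hv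
      have hw' := Finset.mem_subtype.1 hw
      exact hs v.1 hv' w.1 hw' hadj
    omega
  · obtain ⟨s', hs'card, hs'indep⟩ := exists_max_indep H.nonIsolatedPart
    set s : Finset β := s'.image Subtype.val ∪ H.isolatedVerts.toFinset with hsdef
    have hdisj : Disjoint (s'.image Subtype.val) H.isolatedVerts.toFinset := by
      rw [Finset.disjoint_left]
      intro v hv hv2
      obtain ⟨u, hu, rfl⟩ := Finset.mem_image.1 hv
      rw [Set.mem_toFinset] at hv2
      exact ((hisoC u.1).1 hv2) u.2
    have hcard : s.card = H.nonIsolatedPart.indepNumOld + H.isolatedVerts.ncard := by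
      rw [hsdef, Finset.card_union_of_disjoint hdisj,
        Finset.card_image_of_injective _ Subtype.val_injective, hs'card, hncard]
    have hindep : ∀ v ∈ s, ∀ w ∈ s, ¬ H.Adj v w := by
      intro v hv w hw hadj
      rw [hsdef, Finset.mem_union] at hv hw
      rcases hv with hv | hv
      · rcases hw with hw | hw
        · obtain ⟨u1, hu1, rfl⟩ := Finset.mem_image.1 hv
          obtain ⟨u2, hu2, rfl⟩ := Finset.mem_image.1 hw
          exact hs'indep u1 hu1 u2 hu2 hadj
        · rw [Set.mem_toFinset] at hw
          exact hw v (H.adj_symm hadj)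
      · rw [Set.mem_toFinset] at hv
        exact hv w hadj
    rw [← hcard]
    exact card_le_indepNum H hindep
end NonIso

end CombAux

theorem stmt14 (K : Type u) [Field K] {α β : Type v} [Fintype α] [Fintype β]
    [Nonempty α] [Nonempty β] (X : SimpleGraph α) (H : SimpleGraph β) (d : ℕ)
    (hd : ringKrullDim
      (MvPolynomial {v : β | ∃ w, H.Adj v w} K ⧸ H.nonIsolatedPart.edgeIdeal K) = d) :
    ringKrullDim (MvPolynomial (α ⊕ α × β) K ⧸ (X.corona H).edgeIdeal K)
      = ((Fintype.card α * (d + H.isolatedVerts.ncard) : ℕ) : WithBot (WithTop ℕ)) := by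
  classical
  haveI : Fintype {v : β | ∃ w, H.Adj v w} := Set.Finite.fintype (Set.toFinite _)
  have hH' := ringKrullDim_edgeIdeal_eq K H.nonIsolatedPart
  rw [hH'] at hd
  have hd' : H.nonIsolatedPart.indepNumOld = d := by exact WithTop.coe_inj.1 (WithBot.coe_inj.1 hd)
  have hcor := ringKrullDim_edgeIdeal_eq K (X.corona H)
  rw [hcor]
  have hnum : (X.corona H).indepNumOld = Fintype.card α * (d + H.isolatedVerts.ncard) := by
    rw [corona_indepNum X H, indepNum_eq_nonIso_add_iso H, hd']
  exact congrArg Nat.cast hnum
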